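/- If a class C of graphs is χ-bounded by a function f, then the mixed extension ME(C) is χ-bounded: for each ω there exists c(ω) such that every G ∈ ME(C) with clique number ω satisfies χ(G) ≤ c(ω), where c satisfies the recurrence c(ω) ≤ (c(ω−1)+1)·f(ω) + c(ω−1) + 1. -/

import Mathlib

/-!
Induction on the clique number `ω`, for one fixed ordered graph `H` and arbitrary vertex sets
`s`. Cut `s` greedily, along the vertex order, into consecutive blocks, closing a block as soon
as it contains an `ω`-clique. A block minus its last vertex has no `ω`-clique, so by induction it
takes `c (ω - 1)` colors, plus one color for its last vertex.

Let `u ∈ I` and `v ∈ J` be adjacent, in distinct blocks that both contain `ω`-cliques. Were the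
zone `I × J` horizontal, `u` would be adjacent to an `ω`-clique of `J`, giving an
`(ω + 1)`-clique; symmetrically it is not vertical. So the zone is mixed and `uv` is an edge of
the mixed graph, which lies in `C`; restricted to `s` (heredity of `C`) it has clique number at
most `ω` and takes `f ω` colors. Pairing this with the block coloring colors all blocks but the
last with `(c (ω - 1) + 1) * f ω` colors, and the last block gets `c (ω - 1) + 1` fresh ones.
-/

def ZoneHorizontal {m n : ℕ} (M : Matrix (Fin m) (Fin n) (Fin 3))
    (R : Fin m → Prop) (C : Fin n → Prop) : Prop :=
  ∀ i, R i → ∀ j j', C j → C j' → M i j = M i j'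

def ZoneVertical {m n : ℕ} (M : Matrix (Fin m) (Fin n) (Fin 3))
    (R : Fin m → Prop) (C : Fin n → Prop) : Prop :=
  ∀ j, C j → ∀ i i', R i → R i' → M i j = M i' j

def ZoneMixed {m n : ℕ} (M : Matrix (Fin m) (Fin n) (Fin 3))
    (R : Fin m → Prop) (C : Fin n → Prop) : Prop :=
  (¬ ZoneHorizontal M R C ∧ ¬ ZoneVertical M R C) ∨
    ((∃ i i', R i ∧ R i' ∧ i ≠ i') ∧ (∃ j j', C j ∧ C j' ∧ j ≠ j') ∧
      ∃ i j, R i ∧ C j ∧ M i j = 2)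

open Classical in
/-- Adjacency matrix of `G` in the natural order of `Fin n`, `*` = `2` on the
diagonal. -/
noncomputable def adjMat {n : ℕ} (G : SimpleGraph (Fin n)) :
    Matrix (Fin n) (Fin n) (Fin 3) :=
  fun i j => if i = j then 2 else if G.Adj i j then 1 else 0

/-- `Mix` is the mixed subgraph of the ordered graph `H` for the interval
partition `part`: it keeps exactly the edges of `H` between pairs of distinct
intervals whose zone in the adjacency matrix is mixed. -/
def IsMixSubgraph {n k : ℕ} (H : SimpleGraph (Fin n)) (part : Fin n → Fin k)
    (Mix : SimpleGraph (Fin n)) : Prop :=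
  ∀ u v, Mix.Adj u v ↔ H.Adj u v ∧ part u ≠ part v ∧
    ZoneMixed (adjMat H) (fun x => part x = part u) (fun y => part y = part v)

/-- `G` belongs to the mixed extension `ME(C)`: for some vertex ordering
(i.e. some relabelling `H = G ∘ σ` of `G`), every interval partition has its
mixed subgraph in `C`. -/
def MEMember (C : ∀ m : ℕ, SimpleGraph (Fin m) → Prop) {n : ℕ}
    (G : SimpleGraph (Fin n)) : Prop :=
  ∃ σ : Equiv.Perm (Fin n), ∀ (k : ℕ) (part : Fin n → Fin k),
    Monotone part → Function.Surjective part →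
    ∀ Mix : SimpleGraph (Fin n), IsMixSubgraph (G.comap σ) part Mix → C n Mix

open SimpleGraph

namespace SimpleGraph

variable {V : Type*} {G H : SimpleGraph V} {s t : Set V} {a b k r : ℕ}

def ColorableOn (G : SimpleGraph V) (s : Set V) (k : ℕ) : Prop :=
  ∃ col : V → ℕ, (∀ v ∈ s, col v < k) ∧ ∀ u ∈ s, ∀ v ∈ s, G.Adj u v → col u ≠ col v

namespace ColorableOn

theorem mono (h : G.ColorableOn t k) (hst : s ⊆ t) : G.ColorableOn s k :=
  let ⟨col, hlt, hne⟩ := h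
  ⟨col, fun v hv => hlt v (hst hv), fun u hu v hv => hne u (hst hu) v (hst hv)⟩

theorem union (hs : G.ColorableOn s a) (ht : G.ColorableOn t b) :
    G.ColorableOn (s ∪ t) (a + b) := by
  classical
  obtain ⟨cs, hlts, hnes⟩ := hs
  obtain ⟨ct, hltt, hnet⟩ := ht
  refine ⟨fun v => if v ∈ s then cs v else a + ct v, fun v hv => ?_, fun u hu v hv huv => ?_⟩
  · by_cases hvs : v ∈ s
    · simp only [hvs, if_true]; have := hlts v hvs; omega
    · simp only [hvs, if_false]; have := hltt v (hv.resolve_left hvs); omega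
  · by_cases hus : u ∈ s <;> by_cases hvs : v ∈ s <;> simp only [hus, hvs, if_true, if_false]
    · exact hnes u hus v hvs huv
    · have := hlts u hus; omega
    · have := hlts v hvs; omega
    · have := hnet u (hu.resolve_left hus) v (hv.resolve_left hvs) huv; omega

theorem singleton (v : V) : G.ColorableOn {v} 1 :=
  ⟨fun _ => 0, by simp, fun _ hu _ hv huv => absurd (hu.trans hv.symm) (G.ne_of_adj huv)⟩

theorem of_colorable_comap {W : Type*} (e : W ↪ V) (h : (G.comap e).Colorable k) :
    G.ColorableOn (Set.range e) k := by
  obtain ⟨c, hc⟩ := (colorable_iff_exists_bdd_nat_coloring k).1 h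
  refine ⟨Function.extend e c 0, ?_, ?_⟩
  · rintro _ ⟨x, rfl⟩
    rw [e.injective.extend_apply]
    exact hc x
  · rintro _ ⟨x, rfl⟩ _ ⟨y, rfl⟩ hxy
    rw [e.injective.extend_apply, e.injective.extend_apply]
    exact c.valid hxy

theorem colorable (h : G.ColorableOn Set.univ k) : G.Colorable k := by
  obtain ⟨col, hlt, hne⟩ := h
  exact (colorable_iff_exists_bdd_nat_coloring k).2
    ⟨Coloring.mk col fun {u v} huv => hne u trivial v trivial huv, fun v => hlt v trivial⟩

end ColorableOn

theorem colorableOn_add_one_of_inter_Iio [LinearOrder V] (hs : s.Finite)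
    (h : ∀ v ∈ s, G.ColorableOn (s ∩ Set.Iio v) k) : G.ColorableOn s (k + 1) := by
  rcases s.eq_empty_or_nonempty with rfl | hne
  · exact ⟨fun _ => 0, by simp, by simp⟩
  obtain ⟨t, hts, hmax⟩ := Set.exists_max_image s id hs hne
  refine ((h t hts).union (ColorableOn.singleton t)).mono fun x hx => ?_
  rcases (hmax x hx).lt_or_eq with hlt | rfl
  · exact Or.inl ⟨hx, hlt⟩
  · exact Or.inr rfl

theorem colorableOn_mul_of_blocks {ι : Type*} (blk : V → ι)
    (hblk : ∀ i, G.ColorableOn {x | x ∈ s ∧ blk x = i} a) (hH : H.ColorableOn s b)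
    (hcross : ∀ u ∈ s, ∀ v ∈ s, G.Adj u v → blk u ≠ blk v → H.Adj u v) :
    G.ColorableOn s (a * b) := by
  choose ψ hψlt hψne using hblk
  obtain ⟨φ, hφlt, hφne⟩ := hH
  have hψ : ∀ v ∈ s, ψ (blk v) v < a := fun v hv => hψlt _ v ⟨hv, rfl⟩
  refine ⟨fun v => ψ (blk v) v + a * φ v, fun v hv => ?_, fun u hu v hv huv heq => ?_⟩
  · calc ψ (blk v) v + a * φ v < a * (φ v + 1) := by rw [mul_add_one]; linarith [hψ v hv]
      _ ≤ a * b := Nat.mul_le_mul_left a (hφlt v hv)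
  · have hdecode : ∀ x ∈ s, (ψ (blk x) x + a * φ x) / a = φ x ∧
        (ψ (blk x) x + a * φ x) % a = ψ (blk x) x := fun x hx =>
      (Nat.div_mod_unique (by have := hψ x hx; omega)).2 ⟨rfl, hψ x hx⟩
    by_cases hb : blk u = blk v
    · have h : (ψ (blk u) u + a * φ u) % a = (ψ (blk v) v + a * φ v) % a := congrArg (· % a) heq
      rw [(hdecode u hu).2, (hdecode v hv).2, hb] at h
      exact hψne (blk v) u ⟨hu, hb⟩ v ⟨hv, rfl⟩ huv h
    · have h : (ψ (blk u) u + a * φ u) / a = (ψ (blk v) v + a * φ v) / a := congrArg (· / a) heq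
      rw [(hdecode u hu).1, (hdecode v hv).1] at h
      exact hφne u hu v hv (hcross u hu v hv huv hb) h

theorem cliqueFree_cliqueNum_add_one [Finite V] : G.CliqueFree (G.cliqueNum + 1) := fun t ht => by
  have := ht.isClique.card_le_cliqueNum
  rw [ht.card_eq] at this
  omega

theorem cliqueNum_le_of_cliqueFree [Finite V] {ω : ℕ} (h : G.CliqueFree (ω + 1)) :
    G.cliqueNum ≤ ω := by
  by_contra! hlt
  obtain ⟨s, hs⟩ := G.exists_isNClique_cliqueNum
  exact h.mono hlt s hs

theorem CliqueFreeOn.comap_of_range {W : Type*} (e : W ↪ V)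
    (h : G.CliqueFreeOn (Set.range e) r) : (G.comap e).CliqueFree r := fun t ht => by
  refine h (t := t.map e) (by simp) ?_
  exact (ht.map (f := e)).mono (map_comap_le e G)

/-- The blocks are the fibres of `blk` on `S`, the last one being `blk ⁻¹' {last}`.
`cliqueFreeOn_lt` says that a block minus its last vertex is `r`-clique-free. -/
structure IsGreedyBlocking [LinearOrder V] (G : SimpleGraph V) (r : ℕ) (S : Finset V)
    (blk : V → ℕ) (last : ℕ) : Prop where
  monotone : Monotone blk
  le_last : ∀ x, blk x ≤ last
  cliqueFreeOn_lt : ∀ v ∈ S, G.CliqueFreeOn {x | x ∈ S ∧ blk x = blk v ∧ x < v} r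
  exists_isNClique : ∀ v ∈ S, blk v < last →
    ∃ K : Finset V, K ⊆ S ∧ G.IsNClique r K ∧ ∀ x ∈ K, blk x = blk v

namespace IsGreedyBlocking

variable [LinearOrder V] {S : Finset V} {blk : V → ℕ} {last : ℕ}

theorem insert (h : IsGreedyBlocking G r S blk last) {a : V} (ha : ∀ x ∈ S, x < a)
    {last' : ℕ} (hlast : last ≤ last')
    (hfree : G.CliqueFreeOn {x | x ∈ S ∧ blk x = last'} r)
    (hclique : last < last' → ∀ v ∈ S, blk v = last →
      ∃ K : Finset V, K ⊆ S ∧ G.IsNClique r K ∧ ∀ x ∈ K, blk x = last) :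
    IsGreedyBlocking G r (insert a S) (fun x => if x < a then blk x else last') last' := by
  classical
  have hS : ∀ x ∈ S, (if x < a then blk x else last') = blk x := fun x hx => if_pos (ha x hx)
  refine ⟨fun x y hxy => ?_, fun x => ?_, fun v hv => ?_, fun v hv hvlt => ?_⟩
  · split_ifs with hx hy hy
    · exact h.monotone hxy
    · exact (h.le_last x).trans hlast
    · exact absurd (lt_of_le_of_lt hxy hy) hx
    · exact le_rfl
  · split_ifs
    · exact (h.le_last x).trans hlast
    · exact le_rfl
  · rcases Finset.mem_insert.1 hv with rfl | hv
    · refine CliqueFreeOn.subset G (fun x ⟨hx, hblk, hxv⟩ => ?_) hfree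
      have hxS : x ∈ S := (Finset.mem_insert.1 hx).resolve_left hxv.ne
      simp only [hxv, if_true, lt_irrefl, if_false] at hblk
      exact ⟨hxS, hblk⟩
    · refine CliqueFreeOn.subset G (fun x ⟨hx, hblk, hxv⟩ => ?_) (h.cliqueFreeOn_lt v hv)
      have hxS : x ∈ S := (Finset.mem_insert.1 hx).resolve_left (hxv.trans (ha v hv)).ne
      rw [hS x hxS, hS v hv] at hblk
      exact ⟨hxS, hblk, hxv⟩
  · rcases Finset.mem_insert.1 hv with rfl | hv
    · simp at hvlt
    · rw [hS v hv] at hvlt ⊢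
      obtain ⟨K, hKS, hK, hKblk⟩ :
          ∃ K : Finset V, K ⊆ S ∧ G.IsNClique r K ∧ ∀ x ∈ K, blk x = blk v := by
        rcases (h.le_last v).lt_or_eq with hlt | heq
        · exact h.exists_isNClique v hv hlt
        · exact heq ▸ hclique (heq ▸ hvlt) v hv heq
      exact ⟨K, hKS.trans (Finset.subset_insert a S), hK,
        fun x hx => (hS x (hKS hx)).trans (hKblk x hx)⟩

end IsGreedyBlocking

theorem exists_isGreedyBlocking [LinearOrder V] (G : SimpleGraph V) (hr : r ≠ 0)
    (S : Finset V) : ∃ blk last, IsGreedyBlocking G r S blk last := by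
  classical
  induction S using Finset.induction_on_max with
  | empty => exact ⟨fun _ => 0, 0, monotone_const, fun _ => le_rfl, by simp, by simp⟩
  | insert a S ha ih =>
    obtain ⟨blk, last, h⟩ := ih
    by_cases hL : G.CliqueFreeOn {x | x ∈ S ∧ blk x = last} r
    · exact ⟨_, _, h.insert ha le_rfl hL fun hlt => absurd hlt (lt_irrefl last)⟩
    · obtain ⟨K, hKL, hK⟩ : ∃ K : Finset V, ↑K ⊆ {x | x ∈ S ∧ blk x = last} ∧ G.IsNClique r K := by
        simpa [CliqueFreeOn] using hL
      have hempty : G.CliqueFreeOn {x | x ∈ S ∧ blk x = last + 1} r :=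
        CliqueFreeOn.subset G (fun x hx => absurd hx.2 (by have := h.le_last x; omega))
          (G.cliqueFreeOn_empty.2 hr)
      exact ⟨_, _, h.insert ha (Nat.le_succ last) hempty fun _ v _ hv =>
        ⟨K, fun x hx => (hKL hx).1, hK, fun x hx => (hKL hx).2⟩⟩

end SimpleGraph

section MixedGraph

variable {n : ℕ} {H : SimpleGraph (Fin n)} {α : Type*}

theorem adjMat_comm (H : SimpleGraph (Fin n)) (i j : Fin n) : adjMat H i j = adjMat H j i := by
  unfold adjMat
  by_cases h : i = j
  · subst h; rfl
  · rw [if_neg h, if_neg (Ne.symm h), H.adj_comm]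

theorem adjMat_eq_one_iff {i j : Fin n} : adjMat H i j = 1 ↔ H.Adj i j := by
  unfold adjMat
  split_ifs with h₁ h₂ <;> simp_all

theorem zoneHorizontal_iff_zoneVertical {M : Matrix (Fin n) (Fin n) (Fin 3)}
    (hM : ∀ i j, M i j = M j i) {R C : Fin n → Prop} :
    ZoneHorizontal M R C ↔ ZoneVertical M C R := by
  simp only [ZoneHorizontal, ZoneVertical, hM _ (_ : Fin n)]


theorem ZoneMixed.symm {M : Matrix (Fin n) (Fin n) (Fin 3)} (hM : ∀ i j, M i j = M j i)
    {R C : Fin n → Prop} (h : ZoneMixed M R C) : ZoneMixed M C R := by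
  rcases h with ⟨hH, hV⟩ | ⟨hR, hC, i, j, hi, hj, hij⟩
  · exact Or.inl ⟨fun h => hV ((zoneHorizontal_iff_zoneVertical hM).1 h),
      fun h => hH ((zoneHorizontal_iff_zoneVertical hM).2 h)⟩
  · exact Or.inr ⟨hC, hR, j, i, hj, hi, (hM j i).trans hij⟩

def mixGraph (H : SimpleGraph (Fin n)) (part : Fin n → α) : SimpleGraph (Fin n) where
  Adj u v := H.Adj u v ∧ part u ≠ part v ∧
    ZoneMixed (adjMat H) (fun x => part x = part u) (fun y => part y = part v)
  symm := ⟨fun _ _ ⟨h, hne, hz⟩ => ⟨h.symm, hne.symm, hz.symm (adjMat_comm H)⟩⟩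
  loopless := ⟨fun _ h => h.2.1 rfl⟩

theorem mixGraph_adj {part : Fin n → α} {u v : Fin n} :
    (mixGraph H part).Adj u v ↔ H.Adj u v ∧ part u ≠ part v ∧
      ZoneMixed (adjMat H) (fun x => part x = part u) (fun y => part y = part v) :=
  Iff.rfl

theorem mixGraph_le (part : Fin n → α) : mixGraph H part ≤ H := fun _ _ h => h.1

theorem mixGraph_congr {β : Type*} {part : Fin n → α} {part' : Fin n → β}
    (h : ∀ x y, part x = part y ↔ part' x = part' y) : mixGraph H part = mixGraph H part' := by
  ext u v
  have hR : (fun x => part x = part u) = (fun x => part' x = part' u) :=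
    funext fun x => propext (h x u)
  have hC : (fun y => part y = part v) = (fun y => part' y = part' v) :=
    funext fun y => propext (h y v)
  rw [mixGraph_adj, mixGraph_adj, hR, hC, ne_eq, ne_eq, h u v]

theorem Monotone.exists_surjective_fin {ι β : Type*} [Fintype ι] [Preorder ι] [LinearOrder β]
    {g : ι → β} (hg : Monotone g) :
    ∃ (k : ℕ) (p : ι → Fin k), Monotone p ∧ Function.Surjective p ∧
      ∀ x y, p x = p y ↔ g x = g y := by
  classical
  let e := (Finset.univ.image g).orderIsoOfFin rfl
  refine ⟨_, fun x => e.symm ⟨g x, Finset.mem_image_of_mem g (Finset.mem_univ x)⟩,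
    fun x y hxy => e.symm.monotone (hg hxy), fun j => ?_, fun x y => ?_⟩
  · obtain ⟨x, -, hx⟩ := Finset.mem_image.1 (e j).2
    exact ⟨x, e.symm_apply_eq.2 (Subtype.ext hx)⟩
  · rw [e.symm.injective.eq_iff, Subtype.mk.injEq]

def IsMixedExtension (C : ∀ m : ℕ, SimpleGraph (Fin m) → Prop) (H : SimpleGraph (Fin n)) :
    Prop :=
  ∀ (k : ℕ) (part : Fin n → Fin k), Monotone part → Function.Surjective part →
    ∀ Mix : SimpleGraph (Fin n), IsMixSubgraph H part Mix → C n Mix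

theorem IsMixedExtension.mem_mixGraph {C : ∀ m : ℕ, SimpleGraph (Fin m) → Prop}
    (hH : IsMixedExtension C H) [LinearOrder α] {part : Fin n → α} (hpart : Monotone part) :
    C n (mixGraph H part) := by
  obtain ⟨k, p, hmono, hsurj, hker⟩ := hpart.exists_surjective_fin
  rw [mixGraph_congr fun x y => (hker x y).symm]
  exact hH k p hmono hsurj _ fun _ _ => mixGraph_adj

/-- A horizontal zone makes `u` adjacent to the whole block of `v`. -/
theorem not_zoneHorizontal_of_isNClique {part : Fin n → α} {s : Set (Fin n)} {r : ℕ}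
    (hs : H.CliqueFreeOn s (r + 1)) {u v : Fin n} (hu : u ∈ s) (huv : H.Adj u v)
    {K : Finset (Fin n)} (hKs : ↑K ⊆ s) (hK : H.IsNClique r K) (hKv : ∀ x ∈ K, part x = part v) :
    ¬ ZoneHorizontal (adjMat H) (fun x => part x = part u) (fun y => part y = part v) := by
  classical
  intro hzone
  have hadj : ∀ x ∈ K, H.Adj u x := fun x hx =>
    adjMat_eq_one_iff.1 ((hzone u rfl x v (hKv x hx) rfl).trans (adjMat_eq_one_iff.2 huv))
  exact hs (by push_cast; exact Set.insert_subset hu hKs) (hK.insert hadj)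

theorem mixGraph_adj_of_isNClique {part : Fin n → α} {s : Set (Fin n)} {r : ℕ}
    (hs : H.CliqueFreeOn s (r + 1)) {u v : Fin n} (hu : u ∈ s) (hv : v ∈ s) (huv : H.Adj u v)
    (hne : part u ≠ part v) {Ku Kv : Finset (Fin n)}
    (hKus : ↑Ku ⊆ s) (hKu : H.IsNClique r Ku) (hKu' : ∀ x ∈ Ku, part x = part u)
    (hKvs : ↑Kv ⊆ s) (hKv : H.IsNClique r Kv) (hKv' : ∀ x ∈ Kv, part x = part v) :
    (mixGraph H part).Adj u v :=
  mixGraph_adj.2 ⟨huv, hne, Or.inl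
    ⟨not_zoneHorizontal_of_isNClique hs hu huv hKvs hKv hKv', fun hV =>
      not_zoneHorizontal_of_isNClique hs hv huv.symm hKus hKu hKu'
        ((zoneHorizontal_iff_zoneVertical (adjMat_comm H)).2 hV)⟩⟩

end MixedGraph

section ChiBound

def IsHereditary (C : ∀ m : ℕ, SimpleGraph (Fin m) → Prop) : Prop :=
  ∀ (m l : ℕ) (g : Fin l → Fin m), StrictMono g → ∀ H : SimpleGraph (Fin m), C m H → C l (H.comap g)

def IsChiBoundedBy (C : ∀ m : ℕ, SimpleGraph (Fin m) → Prop) (f : ℕ → ℕ) : Prop :=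
  ∀ (m : ℕ) (H : SimpleGraph (Fin m)), C m H → H.Colorable (f H.cliqueNum)

def chiBound (f : ℕ → ℕ) : ℕ → ℕ
  | 0 => 0
  | ω + 1 => (chiBound f ω + 1) * f (ω + 1) + chiBound f ω + 1

variable {C : ∀ m : ℕ, SimpleGraph (Fin m) → Prop} {f : ℕ → ℕ} {n : ℕ}

theorem IsChiBoundedBy.colorableOn (hχ : IsChiBoundedBy C f) (hC : IsHereditary C)
    (hf : Monotone f) {M : SimpleGraph (Fin n)} (hM : C n M) {s : Set (Fin n)} {ω : ℕ}
    (hs : M.CliqueFreeOn s (ω + 1)) : M.ColorableOn s (f ω) := by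
  classical
  let o := s.toFinset.orderEmbOfFin rfl
  have hrange : Set.range o.toEmbedding = s := by simp [o, Finset.range_orderEmbOfFin]
  have hfree : (M.comap o).CliqueFree (ω + 1) :=
    CliqueFreeOn.comap_of_range o.toEmbedding (by rwa [hrange])
  have hcol := (hχ _ _ (hC n _ o o.strictMono M hM)).mono (hf (cliqueNum_le_of_cliqueFree hfree))
  exact hrange ▸ ColorableOn.of_colorable_comap o.toEmbedding hcol

variable {H : SimpleGraph (Fin n)}

theorem IsMixedExtension.colorableOn_succ (hH : IsMixedExtension C H) (hC : IsHereditary C)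
    (hf : Monotone f) (hχ : IsChiBoundedBy C f) {w k : ℕ}
    (ih : ∀ s : Set (Fin n), H.CliqueFreeOn s (w + 1) → H.ColorableOn s k)
    {s : Set (Fin n)} (hs : H.CliqueFreeOn s (w + 2)) :
    H.ColorableOn s ((k + 1) * f (w + 1) + k + 1) := by
  classical
  obtain ⟨blk, last, hblk⟩ := H.exists_isGreedyBlocking w.succ_ne_zero s.toFinset
  have hblock : ∀ i, H.ColorableOn {x | x ∈ s ∧ blk x = i} (k + 1) := fun i =>
    colorableOn_add_one_of_inter_Iio (s.toFinite.subset fun x hx => hx.1) fun v hv =>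
      ih _ <| CliqueFreeOn.subset H
        (fun x ⟨⟨hx, hxi⟩, hxv⟩ => ⟨Set.mem_toFinset.2 hx, hxi.trans hv.2.symm, hxv⟩)
        (hblk.cliqueFreeOn_lt v (Set.mem_toFinset.2 hv.1))
  have hclique : ∀ v ∈ s, blk v < last → ∃ K : Finset (Fin n),
      ↑K ⊆ s ∧ H.IsNClique (w + 1) K ∧ ∀ x ∈ K, blk x = blk v := fun v hv hlt => by
    obtain ⟨K, hKs, hK, hKv⟩ := hblk.exists_isNClique v (Set.mem_toFinset.2 hv) hlt
    exact ⟨K, Set.subset_toFinset.1 hKs, hK, hKv⟩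
  have hmix : (mixGraph H blk).ColorableOn s (f (w + 1)) :=
    hχ.colorableOn hC hf (hH.mem_mixGraph hblk.monotone)
      (CliqueFreeOn.anti _ _ (mixGraph_le blk) hs)
  have hlow : H.ColorableOn {x | x ∈ s ∧ blk x < last} ((k + 1) * f (w + 1)) := by
    refine colorableOn_mul_of_blocks blk (fun i => (hblock i).mono fun x hx => ⟨hx.1.1, hx.2⟩)
      (hmix.mono fun x hx => hx.1) fun u hu v hv huv hne => ?_
    obtain ⟨Ku, hKus, hKu, hKu'⟩ := hclique u hu.1 hu.2
    obtain ⟨Kv, hKvs, hKv, hKv'⟩ := hclique v hv.1 hv.2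
    exact mixGraph_adj_of_isNClique hs hu.1 hv.1 huv hne hKus hKu hKu' hKvs hKv hKv'
  have hcover : s ⊆ {x | x ∈ s ∧ blk x < last} ∪ {x | x ∈ s ∧ blk x = last} := fun x hx =>
    (hblk.le_last x).lt_or_eq.imp (⟨hx, ·⟩) (⟨hx, ·⟩)
  simpa only [add_assoc] using (hlow.union (hblock last)).mono hcover

theorem IsMixedExtension.colorableOn_chiBound (hH : IsMixedExtension C H) (hC : IsHereditary C)
    (hf : Monotone f) (hχ : IsChiBoundedBy C f) (ω : ℕ) {s : Set (Fin n)}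
    (hs : H.CliqueFreeOn s (ω + 1)) : H.ColorableOn s (chiBound f ω) := by
  induction ω generalizing s with
  | zero =>
    obtain rfl : s = ∅ := Set.eq_empty_of_forall_notMem fun v hv =>
      hs (t := {v}) (by simpa using hv) (isNClique_singleton.2 rfl)
    exact ⟨fun _ => 0, by simp, by simp⟩
  | succ w ih => exact hH.colorableOn_succ hC hf hχ (fun _ => ih) hs

end ChiBound

/-- If the hereditary class `C` is χ-bounded by a nondecreasing `f`, then the
mixed extension `ME(C)` is χ-bounded, with bounding function `c` satisfying
`c(ω) ≤ (c(ω−1)+1)·f(ω) + c(ω−1) + 1`. -/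
theorem mixedExtension_chi_bounded
    (C : ∀ m : ℕ, SimpleGraph (Fin m) → Prop)
    (hhered : ∀ (m l : ℕ) (f : Fin l → Fin m), StrictMono f →
      ∀ H : SimpleGraph (Fin m), C m H → C l (H.comap f))
    (f : ℕ → ℕ) (hf : Monotone f)
    (hchi : ∀ (m : ℕ) (H : SimpleGraph (Fin m)), C m H →
      H.Colorable (f H.cliqueNum)) :
    ∃ c : ℕ → ℕ,
      (∀ ω, 1 ≤ ω → c ω ≤ (c (ω - 1) + 1) * f ω + c (ω - 1) + 1) ∧
      ∀ (n : ℕ) (G : SimpleGraph (Fin n)), MEMember C G →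
        G.Colorable (c G.cliqueNum) := by
  refine ⟨chiBound f, fun ω hω => ?_, fun n G ⟨σ, hσ⟩ => ?_⟩
  · obtain ⟨w, rfl⟩ := Nat.exists_eq_add_of_le' hω
    exact le_rfl
  · have hfree : (G.comap σ).CliqueFreeOn Set.univ (G.cliqueNum + 1) :=
      (cliqueFreeOn_univ _).2
        (cliqueFree_cliqueNum_add_one.comap (Iso.comap σ G).toEmbedding.isContained)
    exact (IsMixedExtension.colorableOn_chiBound hσ hhered hf hchi _ hfree).colorable.of_hom
      (Iso.comap σ G).symm.toHom
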